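/- Suppose that there do not exist two distinct s_0, s_1 ∈ S_k^p with c(s_1) = c(s_0). Then the convexity parameter a of c is strictly positive; that is, there exists a > 0 such that c(s) ≥ c(s_0) + ∇c(s_0)ᵀ(s − s_0) + (a²/2)(s − s_0)ᵀ(s − s_0) for all s, s_0 ∈ S_k^p. -/

import Mathlib

open Matrix BigOperators

/-- `S_k^p`: binary vectors in `{0,1}^p` with exactly `k` ones. -/
def SkpSet (p k : ℕ) : Set (Fin p → ℝ) :=
  {s | (∀ j, s j = 0 ∨ s j = 1) ∧ ∑ j, s j = (k : ℝ)}

/-- Diagonal 0/1 matrix `W_i` of the observed entries of row `i`. -/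
noncomputable def Wmat {n m : ℕ} (Om : Finset (Fin n × Fin m)) (i : Fin n) :
    Matrix (Fin m) (Fin m) ℝ :=
  Matrix.diagonal (fun j => if (i, j) ∈ Om then (1 : ℝ) else 0)

/-- `ā_i`: the `i`-th row of `A` with unobserved entries set to `0`. -/
noncomputable def abar {n m : ℕ} (Om : Finset (Fin n × Fin m))
    (A : Matrix (Fin n) (Fin m) ℝ) (i : Fin n) : Fin m → ℝ :=
  fun j => if (i, j) ∈ Om then A i j else 0

/-- `K_j = b^j (b^j)ᵀ`. -/
noncomputable def Kmat {m p : ℕ} (B : Matrix (Fin m) (Fin p) ℝ) (j : Fin p) :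
    Matrix (Fin m) (Fin m) ℝ :=
  Matrix.vecMulVec (fun r => B r j) (fun r => B r j)

/-- `c(s)`, extended smoothly to real arguments. -/
noncomputable def cfun {n m p : ℕ} (γ : ℝ) (Om : Finset (Fin n × Fin m))
    (A : Matrix (Fin n) (Fin m) ℝ) (B : Matrix (Fin m) (Fin p) ℝ)
    (s : Fin p → ℝ) : ℝ :=
  (1 / ((n : ℝ) * (m : ℝ))) * ∑ i : Fin n,
    abar Om A i ⬝ᵥ
      (((1 : Matrix (Fin m) (Fin m) ℝ) +
          γ • (Wmat Om i * (∑ j : Fin p, s j • Kmat B j) * Wmat Om i))⁻¹ *ᵥ abar Om A i)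

/-!
Write `X_i(s) = I + γ W_i (∑_j s_j K_j) W_i`, positive definite for `s ≥ 0`, and
`v_i(s) = X_i(s)⁻¹ āᵢ`, so that `c(s) = (1/nm) ∑_i āᵢ ⬝ v_i(s)`. Since `X_i` is affine,
differentiating the inverse gives
`∇c(s₀)ᵀ(s - s₀) = -(1/nm) ∑_i v_i(s₀)ᵀ (X_i(s) - X_i(s₀)) v_i(s₀)`,
and completing the square turns the first-order remainder into
`c(s) - c(s₀) - ∇c(s₀)ᵀ(s - s₀) = (1/nm) ∑_i (v_i(s) - v_i(s₀))ᵀ X_i(s) (v_i(s) - v_i(s₀))`.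
This is positive unless every `v_i(s) = v_i(s₀)`, which would force `c(s) = c(s₀)`. As `S_k^p` is
finite, the remainder divided by `‖s - s₀‖²` has a positive minimum over distinct pairs.
-/

namespace Matrix

variable {ι : Type*} [Fintype ι]

theorem dotProduct_inv_mulVec_sub_add_eq [DecidableEq ι] {R : Type*} [CommRing R]
    {X Y : Matrix ι ι R} (hX : IsUnit X.det) (hY : IsUnit Y.det) (hYs : Y.IsSymm) (a : ι → R) :
    a ⬝ᵥ (Y⁻¹ *ᵥ a) - a ⬝ᵥ (X⁻¹ *ᵥ a) + (X⁻¹ *ᵥ a) ⬝ᵥ ((Y - X) *ᵥ (X⁻¹ *ᵥ a)) =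
      (Y⁻¹ *ᵥ a - X⁻¹ *ᵥ a) ⬝ᵥ (Y *ᵥ (Y⁻¹ *ᵥ a - X⁻¹ *ᵥ a)) := by
  set u := X⁻¹ *ᵥ a
  set v := Y⁻¹ *ᵥ a
  have hXu : X *ᵥ u = a := by rw [mulVec_mulVec, mul_nonsing_inv _ hX, one_mulVec]
  have hYv : Y *ᵥ v = a := by rw [mulVec_mulVec, mul_nonsing_inv _ hY, one_mulVec]
  have hvY : v ᵥ* Y = a := by rw [← mulVec_transpose, hYs.eq, hYv]
  simp only [sub_mulVec, mulVec_sub, dotProduct_sub, sub_dotProduct]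
  rw [dotProduct_mulVec v Y u, hXu, hYv, hvY, dotProduct_comm u a, dotProduct_comm v a]
  ring

section Calculus

attribute [local instance] Matrix.linftyOpNormedRing Matrix.linftyOpNormedAlgebra

noncomputable def dotProductMulVecCLM (u : ι → ℝ) : Matrix ι ι ℝ →L[ℝ] ℝ :=
  LinearMap.toContinuousLinearMap
    { toFun := fun M => u ⬝ᵥ (M *ᵥ u)
      map_add' := fun M N => by rw [add_mulVec, dotProduct_add]
      map_smul' := fun c M => by rw [smul_mulVec, dotProduct_smul]; rfl }

@[simp]
theorem dotProductMulVecCLM_apply (u : ι → ℝ) (M : Matrix ι ι ℝ) :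
    dotProductMulVecCLM u M = u ⬝ᵥ (M *ᵥ u) := rfl

theorem hasFDerivAt_dotProduct_inv_mulVec [DecidableEq ι] {E : Type*} [NormedAddCommGroup E]
    [NormedSpace ℝ E] {X : E → Matrix ι ι ℝ} {X' : E →L[ℝ] Matrix ι ι ℝ} {x : E}
    (hX : HasFDerivAt X X' x) (hXu : IsUnit (X x)) (hXs : (X x).IsSymm) (a : ι → ℝ) :
    HasFDerivAt (fun y => a ⬝ᵥ ((X y)⁻¹ *ᵥ a))
      (-(dotProductMulVecCLM ((X x)⁻¹ *ᵥ a)).comp X') x := by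
  have hinv : HasFDerivAt Ring.inverse
      (-ContinuousLinearMap.mulLeftRight ℝ _ (X x)⁻¹ (X x)⁻¹) (X x) := by
    simpa [← nonsing_inv_eq_ringInverse] using hasFDerivAt_ringInverse (𝕜 := ℝ) hXu.unit
  have hf : (fun y => a ⬝ᵥ ((X y)⁻¹ *ᵥ a)) =
      fun y => dotProductMulVecCLM a (Ring.inverse (X y)) := by
    simp_rw [nonsing_inv_eq_ringInverse]
    rfl
  rw [hf]
  refine ((dotProductMulVecCLM a).hasFDerivAt.comp x (hinv.comp x hX)).congr_fderiv ?_
  refine ContinuousLinearMap.ext fun h => ?_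
  have hinvs : ((X x)⁻¹)ᵀ = (X x)⁻¹ := by rw [transpose_nonsing_inv, hXs.eq]
  -- `simp` cannot unfold the composite: `Matrix ι ι ℝ` carries two (defeq) topologies here.
  change a ⬝ᵥ (-((X x)⁻¹ * X' h * (X x)⁻¹) *ᵥ a) =
    -(((X x)⁻¹ *ᵥ a) ⬝ᵥ (X' h *ᵥ ((X x)⁻¹ *ᵥ a)))
  rw [neg_mulVec, dotProduct_neg, ← mulVec_mulVec, ← mulVec_mulVec, dotProduct_mulVec a,
    ← mulVec_transpose, hinvs]

end Calculus

end Matrix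

theorem exists_pos_forall_mul_le_of_finite {α : Type*} {S : Set α} (hS : S.Finite)
    (f g : α → α → ℝ) (hg : ∀ x ∈ S, ∀ y ∈ S, x ≠ y → 0 < g x y) :
    ∃ ε > 0, ∀ x ∈ S, ∀ y ∈ S, x ≠ y → ε * f x y ≤ g x y := by
  have hsmall : ∀ᶠ ε in nhdsWithin (0 : ℝ) (Set.Ioi 0),
      ∀ x ∈ S, ∀ y ∈ S, x ≠ y → ε * f x y ≤ g x y := by
    refine (Filter.eventually_all_finite hS).mpr fun x hx =>
      (Filter.eventually_all_finite hS).mpr fun y hy => ?_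
    by_cases hxy : x = y
    · exact Filter.Eventually.of_forall fun _ h => absurd hxy h
    have hlim : Filter.Tendsto (fun ε : ℝ => ε * f x y) (nhdsWithin 0 (Set.Ioi 0)) (nhds 0) :=
      ((continuous_mul_const (f x y)).tendsto' 0 0 (zero_mul _)).mono_left nhdsWithin_le_nhds
    exact (hlim.eventually (gt_mem_nhds (hg x hx y hy hxy))).mono fun _ h _ => h.le
  exact (hsmall.and self_mem_nhdsWithin).exists.imp fun ε h => ⟨h.2, h.1⟩

variable {n m p : ℕ}

noncomputable def regMat (γ : ℝ) (Om : Finset (Fin n × Fin m)) (B : Matrix (Fin m) (Fin p) ℝ)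
    (i : Fin n) (s : Fin p → ℝ) : Matrix (Fin m) (Fin m) ℝ :=
  1 + γ • (Wmat Om i * (∑ j, s j • Kmat B j) * Wmat Om i)

noncomputable def regSol (γ : ℝ) (Om : Finset (Fin n × Fin m)) (A : Matrix (Fin n) (Fin m) ℝ)
    (B : Matrix (Fin m) (Fin p) ℝ) (i : Fin n) (s : Fin p → ℝ) : Fin m → ℝ :=
  (regMat γ Om B i s)⁻¹ *ᵥ abar Om A i

theorem cfun_eq_sum_regSol (γ : ℝ) (Om : Finset (Fin n × Fin m))
    (A : Matrix (Fin n) (Fin m) ℝ) (B : Matrix (Fin m) (Fin p) ℝ) (s : Fin p → ℝ) :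
    cfun γ Om A B s = 1 / ((n : ℝ) * m) * ∑ i, abar Om A i ⬝ᵥ regSol γ Om A B i s :=
  rfl

theorem posDef_regMat {γ : ℝ} (hγ : 0 ≤ γ) (Om : Finset (Fin n × Fin m))
    (B : Matrix (Fin m) (Fin p) ℝ) (i : Fin n) {s : Fin p → ℝ} (hs : 0 ≤ s) :
    (regMat γ Om B i s).PosDef := by
  have hK : (∑ j, s j • Kmat B j).PosSemidef := posSemidef_sum _ fun j _ => by
    simpa [Kmat] using (posSemidef_vecMulVec_self_star fun r => B r j).smul (hs j)
  have hW : (Wmat Om i)ᵀ = Wmat Om i := diagonal_transpose _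
  refine PosDef.one.add_posSemidef (PosSemidef.smul ?_ hγ)
  simpa [hW] using hK.mul_mul_conjTranspose_same (Wmat Om i)

section Calculus

attribute [local instance] Matrix.linftyOpNormedRing Matrix.linftyOpNormedAlgebra

noncomputable def penaltyCLM (γ : ℝ) (Om : Finset (Fin n × Fin m))
    (B : Matrix (Fin m) (Fin p) ℝ) (i : Fin n) : (Fin p → ℝ) →L[ℝ] Matrix (Fin m) (Fin m) ℝ :=
  LinearMap.toContinuousLinearMap
    { toFun := fun s => γ • (Wmat Om i * (∑ j, s j • Kmat B j) * Wmat Om i)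
      map_add' := fun s t => by
        simp only [Pi.add_apply, add_smul, Finset.sum_add_distrib, mul_add, add_mul, smul_add]
      map_smul' := fun c s => by
        simp only [Pi.smul_apply, smul_eq_mul, mul_smul, ← Finset.smul_sum, mul_smul_comm,
          smul_mul_assoc, RingHom.id_apply]
        exact smul_comm γ c _ }

theorem regMat_eq_one_add (γ : ℝ) (Om : Finset (Fin n × Fin m)) (B : Matrix (Fin m) (Fin p) ℝ)
    (i : Fin n) : regMat γ Om B i = fun s => 1 + penaltyCLM γ Om B i s :=
  rfl

theorem regMat_sub_regMat (γ : ℝ) (Om : Finset (Fin n × Fin m))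
    (B : Matrix (Fin m) (Fin p) ℝ) (i : Fin n) (s s₀ : Fin p → ℝ) :
    regMat γ Om B i s - regMat γ Om B i s₀ = penaltyCLM γ Om B i (s - s₀) := by
  rw [regMat_eq_one_add, map_sub, add_sub_add_left_eq_sub]

theorem hasFDerivAt_cfun {γ : ℝ} (hγ : 0 ≤ γ) (Om : Finset (Fin n × Fin m))
    (A : Matrix (Fin n) (Fin m) ℝ) (B : Matrix (Fin m) (Fin p) ℝ) {s₀ : Fin p → ℝ}
    (hs₀ : 0 ≤ s₀) :
    HasFDerivAt (cfun γ Om A B) ((1 / ((n : ℝ) * m)) • ∑ i,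
      -(dotProductMulVecCLM (regSol γ Om A B i s₀)).comp (penaltyCLM γ Om B i)) s₀ := by
  refine HasFDerivAt.const_mul (HasFDerivAt.fun_sum fun i _ => ?_) _
  have hX : HasFDerivAt (regMat γ Om B i) (penaltyCLM γ Om B i) s₀ := by
    rw [regMat_eq_one_add]
    exact (penaltyCLM γ Om B i).hasFDerivAt.const_add 1
  have hpos := posDef_regMat hγ Om B i hs₀
  exact hasFDerivAt_dotProduct_inv_mulVec hX hpos.isUnit
    (isHermitian_iff_isSymm.mp hpos.isHermitian) (abar Om A i)

theorem cfun_sub_sub_fderiv {γ : ℝ} (hγ : 0 ≤ γ) (Om : Finset (Fin n × Fin m))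
    (A : Matrix (Fin n) (Fin m) ℝ) (B : Matrix (Fin m) (Fin p) ℝ) {s s₀ : Fin p → ℝ}
    (hs : 0 ≤ s) (hs₀ : 0 ≤ s₀) :
    cfun γ Om A B s - cfun γ Om A B s₀ - fderiv ℝ (cfun γ Om A B) s₀ (s - s₀) =
      1 / ((n : ℝ) * m) * ∑ i, (regSol γ Om A B i s - regSol γ Om A B i s₀) ⬝ᵥ
        (regMat γ Om B i s *ᵥ (regSol γ Om A B i s - regSol γ Om A B i s₀)) := by
  rw [(hasFDerivAt_cfun hγ Om A B hs₀).fderiv, cfun_eq_sum_regSol, cfun_eq_sum_regSol]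
  simp only [_root_.smul_apply, _root_.sum_apply, _root_.neg_apply,
    ContinuousLinearMap.comp_apply, dotProductMulVecCLM_apply, ← regMat_sub_regMat, smul_eq_mul]
  rw [← mul_sub, ← mul_sub, ← Finset.sum_sub_distrib, ← Finset.sum_sub_distrib]
  refine congrArg _ (Finset.sum_congr rfl fun i _ => ?_)
  have hX := posDef_regMat hγ Om B i hs₀
  have hY := posDef_regMat hγ Om B i hs
  rw [regSol, regSol, ← dotProduct_inv_mulVec_sub_add_eq hX.det_pos.ne'.isUnit
    hY.det_pos.ne'.isUnit (isHermitian_iff_isSymm.mp hY.isHermitian)]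
  ring

end Calculus

theorem cfun_sub_sub_fderiv_pos {γ : ℝ} (hγ : 0 ≤ γ) (Om : Finset (Fin n × Fin m))
    (A : Matrix (Fin n) (Fin m) ℝ) (B : Matrix (Fin m) (Fin p) ℝ) {s s₀ : Fin p → ℝ}
    (hs : 0 ≤ s) (hs₀ : 0 ≤ s₀) (hne : cfun γ Om A B s ≠ cfun γ Om A B s₀) :
    0 < cfun γ Om A B s - cfun γ Om A B s₀ - fderiv ℝ (cfun γ Om A B) s₀ (s - s₀) := by
  have hc : 1 / ((n : ℝ) * m) ≠ 0 := fun h => hne <| by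
    rw [cfun_eq_sum_regSol, cfun_eq_sum_regSol, h, zero_mul, zero_mul]
  obtain ⟨i, hi⟩ : ∃ i, regSol γ Om A B i s ≠ regSol γ Om A B i s₀ := by
    by_contra! h
    exact hne (by simp only [cfun_eq_sum_regSol, h])
  rw [cfun_sub_sub_fderiv hγ Om A B hs hs₀]
  refine mul_pos (lt_of_le_of_ne (by positivity) hc.symm) (Finset.sum_pos' (fun j _ => ?_) ?_)
  · simpa using (posDef_regMat hγ Om B j hs).posSemidef.dotProduct_mulVec_nonneg
      (regSol γ Om A B j s - regSol γ Om A B j s₀)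
  · exact ⟨i, Finset.mem_univ i, by
      simpa using (posDef_regMat hγ Om B i hs).dotProduct_mulVec_pos (sub_ne_zero.mpr hi)⟩

theorem nonneg_of_mem_SkpSet {p k : ℕ} {s : Fin p → ℝ} (hs : s ∈ SkpSet p k) : 0 ≤ s :=
  fun j => (hs.1 j).elim (fun h => h.ge) (fun h => h ▸ zero_le_one)

theorem finite_SkpSet (p k : ℕ) : (SkpSet p k).Finite :=
  (Set.Finite.pi fun _ => (Set.toFinite {0, 1})).subset fun _ hs j _ => hs.1 j

theorem stmt15_general {n m p k : ℕ}
    (γ : ℝ) (hγ : 0 < γ) (Om : Finset (Fin n × Fin m))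
    (A : Matrix (Fin n) (Fin m) ℝ) (B : Matrix (Fin m) (Fin p) ℝ)
    (hne : ∀ s₀ ∈ SkpSet p k, ∀ s₁ ∈ SkpSet p k, s₀ ≠ s₁ →
      cfun γ Om A B s₀ ≠ cfun γ Om A B s₁) :
    ∃ a : ℝ, 0 < a ∧ ∀ s ∈ SkpSet p k, ∀ s₀ ∈ SkpSet p k,
      cfun γ Om A B s₀ + fderiv ℝ (cfun γ Om A B) s₀ (s - s₀) +
          a ^ 2 / 2 * ∑ j, (s j - s₀ j) ^ 2 ≤
        cfun γ Om A B s := by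
  obtain ⟨ε, hε, hgap⟩ := exists_pos_forall_mul_le_of_finite (finite_SkpSet p k)
    (fun s s₀ => ∑ j, (s j - s₀ j) ^ 2)
    (fun s s₀ => cfun γ Om A B s - cfun γ Om A B s₀ - fderiv ℝ (cfun γ Om A B) s₀ (s - s₀))
    fun s hs s₀ hs₀ hss₀ => cfun_sub_sub_fderiv_pos hγ.le Om A B
      (nonneg_of_mem_SkpSet hs) (nonneg_of_mem_SkpSet hs₀) (hne s hs s₀ hs₀ hss₀)
  refine ⟨√(2 * ε), by positivity, fun s hs s₀ hs₀ => ?_⟩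
  rw [Real.sq_sqrt (by positivity), mul_div_cancel_left₀ _ two_ne_zero]
  rcases eq_or_ne s s₀ with rfl | hss₀
  · simp
  · linarith [hgap s hs s₀ hs₀ hss₀]

/-- If no two distinct points of `S_k^p` give the same value of `c`, then the convexity
parameter of `c` is strictly positive: there is `a > 0` such that
`c(s) ≥ c(s₀) + ∇c(s₀)ᵀ(s − s₀) + (a²/2)‖s − s₀‖₂²` for all `s, s₀ ∈ S_k^p`. -/
theorem stmt15 {n m p k : ℕ} (hn : 0 < n) (hm : 0 < m) (hk : 0 < k) (hkp : k ≤ p)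
    (γ : ℝ) (hγ : 0 < γ) (Om : Finset (Fin n × Fin m))
    (A : Matrix (Fin n) (Fin m) ℝ) (B : Matrix (Fin m) (Fin p) ℝ)
    (hne : ∀ s₀ ∈ SkpSet p k, ∀ s₁ ∈ SkpSet p k, s₀ ≠ s₁ →
      cfun γ Om A B s₀ ≠ cfun γ Om A B s₁) :
    ∃ a : ℝ, 0 < a ∧ ∀ s ∈ SkpSet p k, ∀ s₀ ∈ SkpSet p k,
      cfun γ Om A B s₀ + fderiv ℝ (cfun γ Om A B) s₀ (s - s₀) +
          a ^ 2 / 2 * ∑ j, (s j - s₀ j) ^ 2 ≤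
        cfun γ Om A B s :=
  stmt15_general γ hγ Om A B hne
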